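/- arXiv:2507.05743 — 5 statements merged into one kernel-verified Lean document; each statement's English description precedes it below -/
import Mathlib

section
/- Let B be the n×n matrix (n ≥ 3) with B_{j,j+1} = 1/2, B_{j+1,j} = −1/2 for 1 ≤ j ≤ n−2, last row entries B_{n,n−2} = 1/2, B_{n,n−1} = −2, B_{n,n} = 3/2, and zeros elsewhere on the diagonal except B_{n,n}. If λ ∈ ℂ and a nonzero vector P = (p_0,…,p_{n−1})^T satisfy B P = λ P, then p_0 ≠ 0. -/
open Matrix

private lemma sum_one_aux {n : ℕ} (P : Fin n → ℂ) (a : ℕ) (ha : a < n) (c : ℂ) :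
    ∑ j : Fin n, (if (j : ℕ) = a then c else 0) * P j = c * P ⟨a, ha⟩ := by
  have h : ∀ j : Fin n, (if (j : ℕ) = a then c else 0) * P j
      = if j = (⟨a, ha⟩ : Fin n) then c * P ⟨a, ha⟩ else 0 := by
    intro j
    rcases eq_or_ne j (⟨a, ha⟩ : Fin n) with rfl | hj
    · simp
    · have : (j : ℕ) ≠ a := fun h => hj (Fin.ext h)
      simp [hj, this]
  rw [Finset.sum_congr rfl fun j _ => h j, Finset.sum_ite_eq']
  simp

private lemma sum_two_aux {n : ℕ} (P : Fin n → ℂ) (a b : ℕ) (ha : a < n) (hb : b < n)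
    (hab : a ≠ b) (c c' : ℂ) :
    ∑ j : Fin n, (if (j : ℕ) = a then c else if (j : ℕ) = b then c' else 0) * P j
      = c * P ⟨a, ha⟩ + c' * P ⟨b, hb⟩ := by
  have h : ∀ j : Fin n, (if (j : ℕ) = a then c else if (j : ℕ) = b then c' else 0) * P j
      = (if (j : ℕ) = a then c else 0) * P j + (if (j : ℕ) = b then c' else 0) * P j := by
    intro j
    rcases eq_or_ne (j : ℕ) a with hja | hja
    · have : (j : ℕ) ≠ b := hja ▸ hab
      simp [hja, hab]
    · simp [hja]
  rw [Finset.sum_congr rfl fun j _ => h j, Finset.sum_add_distrib,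
    sum_one_aux P a ha, sum_one_aux P b hb]

/-- `B` is the hybrid central-difference/BDF2 time-discretization matrix. If `B P = λ P`
with `P ≠ 0`, then the first entry `p_0` of the eigenvector is nonzero. -/
theorem eigenvector_first_entry_ne_zero (n : ℕ) (hn : 3 ≤ n)
    (B : Matrix (Fin n) (Fin n) ℂ)
    (hB : B = Matrix.of fun i j : Fin n =>
      if (i : ℕ) < n - 1 then
        (if (j : ℕ) = (i : ℕ) + 1 then 1 / 2
         else if (j : ℕ) + 1 = (i : ℕ) then -(1 / 2) else 0)
      else
        (if (j : ℕ) = n - 3 then 1 / 2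
         else if (j : ℕ) = n - 2 then -2
         else if (j : ℕ) = n - 1 then 3 / 2 else 0))
    (lam : ℂ) (P : Fin n → ℂ) (hP : P ≠ 0) (heig : B.mulVec P = lam • P) :
    P ⟨0, by omega⟩ ≠ 0 := by
  intro h0
  apply hP
  subst hB
  -- row computation: for k with k + 1 < n, the eigen-equation at row k
  have hrow : ∀ k : ℕ, ∀ hk : k + 1 < n,
      (∑ j : Fin n, (if (j : ℕ) = k + 1 then (1/2 : ℂ)
        else if (j : ℕ) + 1 = k then -(1/2) else 0) * P j) = lam * P ⟨k, by omega⟩ := by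
    intro k hk
    have h := congrFun heig ⟨k, by omega⟩
    have hklt : k < n - 1 := by omega
    simpa [Matrix.mulVec, dotProduct, hklt] using h
  have hrec : ∀ m : ℕ, ∀ hm : m < n, P ⟨m, hm⟩ = 0 := by
    intro m
    induction m using Nat.strong_induction_on with
    | _ m ih =>
      intro hm
      match m, hm with
      | 0, hm => exact h0
      | 1, hm =>
        have h := hrow 0 (by omega)
        have hz : ∀ j : Fin n, ((j : ℕ) + 1 = 0) = False := by
          intro j; simp
        simp only [hz, if_false] at h
        rw [sum_one_aux P 1 (by omega)] at h
        have h00 := ih 0 (by omega) (by omega)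
        rw [h00] at h
        have : (1/2 : ℂ) ≠ 0 := by norm_num
        field_simp at h
        simpa using h
      | (k+2), hm =>
        have h := hrow (k+1) (by omega)
        have hcond : ∀ j : Fin n, ((j : ℕ) + 1 = k + 1) = ((j : ℕ) = k) := by
          intro j; simp
        simp only [hcond] at h
        rw [sum_two_aux P (k+2) k (by omega) (by omega) (by omega)] at h
        have h1 := ih (k+1) (by omega) (by omega)
        have h2 := ih k (by omega) (by omega)
        rw [h1, h2] at h
        have : (1/2 : ℂ) * P ⟨k+2, hm⟩ = 0 := by
          simpa using h
        have h12 : (1/2 : ℂ) ≠ 0 := by norm_num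
        exact (mul_eq_zero.mp this).resolve_left h12
  funext j
  have := hrec (j : ℕ) j.isLt
  simpa using this
end

section
/- Let B be the n×n matrix with first n−1 rows given by the central difference stencil (B_{j,j−1} = −1/2, B_{j,j+1} = 1/2, B_{j,j} = 0) and last row (0,…,0, 1/2, −2, 3/2). Then λ ∈ ℂ is an eigenvalue of B if and only if λ = i·x where x is a root of U_{n−1}(x) + i U_{n−2}(x) − i T_n(x) + T_{n−1}(x) = 0; moreover the eigenvector for λ = i·x is (i^0 U_0(x), i^1 U_1(x), …, i^{n−1} U_{n−1}(x))^T. -/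
/-!
Write `λ = i x`. The first `n - 1` rows of `B P = λ P` form the three-term recurrence
`P (k + 1) = 2 λ P k + P (k - 1)` with `P (-1) = 0`, and `k ↦ i^k U_k(x)` solves it because
`U_{k+1} = 2 X U_k - U_{k-1}` and `i^2 = -1`. Hence every eigenvector is a multiple of
`v = (i^k U_k(x))_k`, and `v` satisfies all rows but the last one, where the defect is
`-i^(n-3)` times `U_{n-1}(x) + i U_{n-2}(x) - i T_n(x) + T_{n-1}(x)`.
-/

open Matrix Polynomial Polynomial.Chebyshev Complex

lemma sum_ite_val_eq_mul {R : Type*} [NonUnitalNonAssocSemiring R] {n : ℕ} (P : Fin n → R) (c : R)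
    {a : ℕ} (ha : a < n) :
    ∑ j : Fin n, (if (j : ℕ) = a then c else 0) * P j = c * P ⟨a, ha⟩ := by
  rw [Finset.sum_eq_single_of_mem ⟨a, ha⟩ (Finset.mem_univ _) fun j _ hj => by
    rw [if_neg (Fin.val_ne_of_ne hj), zero_mul]]
  rw [if_pos rfl]

noncomputable def hybridMatrix (n : ℕ) : Matrix (Fin n) (Fin n) ℂ :=
  Matrix.of fun i j : Fin n =>
      if (i : ℕ) < n - 1 then
        (if (j : ℕ) = (i : ℕ) + 1 then 1 / 2
         else if (j : ℕ) + 1 = (i : ℕ) then -(1 / 2) else 0)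
      else
        (if (j : ℕ) = n - 3 then 1 / 2
         else if (j : ℕ) = n - 2 then -2
         else if (j : ℕ) = n - 1 then 3 / 2 else 0)

lemma hybridMatrix_mulVec_zero {n : ℕ} (hn : 1 < n) (P : Fin n → ℂ) :
    (hybridMatrix n *ᵥ P) ⟨0, by omega⟩ = P ⟨1, hn⟩ / 2 := by
  have hrow : ∀ j : Fin n, hybridMatrix n ⟨0, by omega⟩ j * P j
      = (if (j : ℕ) = 1 then 1 / 2 else 0) * P j := by
    intro j
    simp only [hybridMatrix, of_apply]
    split_ifs <;> first | omega | contradiction | ring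
  simp only [mulVec, dotProduct, hrow, sum_ite_val_eq_mul _ _ hn]
  ring

lemma hybridMatrix_mulVec_succ {n k : ℕ} (hk : k + 2 < n) (P : Fin n → ℂ) :
    (hybridMatrix n *ᵥ P) ⟨k + 1, by omega⟩ = (P ⟨k + 2, hk⟩ - P ⟨k, by omega⟩) / 2 := by
  have hrow : ∀ j : Fin n, hybridMatrix n ⟨k + 1, by omega⟩ j * P j
      = (if (j : ℕ) = k + 2 then 1 / 2 else 0) * P j
        + (if (j : ℕ) = k then -(1 / 2) else 0) * P j := by
    intro j
    simp only [hybridMatrix, of_apply]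
    split_ifs <;> first | omega | contradiction | ring
  simp only [mulVec, dotProduct, hrow, Finset.sum_add_distrib, sum_ite_val_eq_mul _ _ hk,
    sum_ite_val_eq_mul _ _ (show k < n by omega)]
  ring

lemma hybridMatrix_mulVec_last {m : ℕ} (P : Fin (m + 3) → ℂ) :
    (hybridMatrix (m + 3) *ᵥ P) (Fin.last (m + 2))
      = P ⟨m, by omega⟩ / 2 - 2 * P ⟨m + 1, by omega⟩ + 3 / 2 * P ⟨m + 2, by omega⟩ := by
  have hrow : ∀ j : Fin (m + 3), hybridMatrix (m + 3) (Fin.last (m + 2)) j * P j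
      = (if (j : ℕ) = m then 1 / 2 else 0) * P j
        + (if (j : ℕ) = m + 1 then -2 else 0) * P j
        + (if (j : ℕ) = m + 2 then 3 / 2 else 0) * P j := by
    intro j
    simp only [hybridMatrix, of_apply, Fin.val_last]
    split_ifs <;> first | omega | contradiction | ring
  simp only [mulVec, dotProduct, hrow, Finset.sum_add_distrib,
    sum_ite_val_eq_mul _ _ (show m < m + 3 by omega),
    sum_ite_val_eq_mul _ _ (show m + 1 < m + 3 by omega),
    sum_ite_val_eq_mul _ _ (show m + 2 < m + 3 by omega)]
  ring

noncomputable def chebSeq (x : ℂ) (k : ℕ) : ℂ := I ^ k * (U ℂ k).eval x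

lemma chebSeq_zero (x : ℂ) : chebSeq x 0 = 1 := by
  simp [chebSeq]

lemma chebSeq_one (x : ℂ) : chebSeq x 1 = 2 * (I * x) := by
  simp only [chebSeq, pow_one, Nat.cast_one, U_one, eval_mul, eval_ofNat, eval_X]
  ring

lemma chebSeq_add_two (x : ℂ) (k : ℕ) :
    chebSeq x (k + 2) = 2 * (I * x) * chebSeq x (k + 1) + chebSeq x k := by
  simp only [chebSeq, Nat.cast_add, Nat.cast_ofNat, Nat.cast_one, U_add_two, eval_sub, eval_mul,
    eval_ofNat, eval_X]
  linear_combination (-(I ^ k * (U ℂ k).eval x)) * I_sq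

noncomputable def hybridChar (n : ℕ) (x : ℂ) : ℂ :=
  (U ℂ ((n : ℤ) - 1)).eval x + I * (U ℂ ((n : ℤ) - 2)).eval x
    - I * (T ℂ n).eval x + (T ℂ ((n : ℤ) - 1)).eval x

-- Both sides reduce to combinations of `U_m(x)` and `U_{m+1}(x)` via `T_k = U_k - X U_{k-1}`.
lemma chebSeq_last_row (m : ℕ) (x : ℂ) :
    chebSeq x m / 2 - 2 * chebSeq x (m + 1) + 3 / 2 * chebSeq x (m + 2) - I * x * chebSeq x (m + 2)
      = -I ^ m * hybridChar (m + 3) x := by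
  have hT3 := T_eq_U_sub_X_mul_U ℂ ((m : ℤ) + 3)
  have hT2 := T_eq_U_sub_X_mul_U ℂ ((m : ℤ) + 2)
  have hU3 := U_add_two ℂ ((m : ℤ) + 1)
  have hU2 := U_add_two ℂ (m : ℤ)
  simp only [show (m : ℤ) + 3 - 1 = m + 2 by ring, show (m : ℤ) + 2 - 1 = m + 1 by ring,
    show (m : ℤ) + 1 + 2 = m + 3 by ring, show (m : ℤ) + 1 + 1 = m + 2 by ring] at hT3 hT2 hU3
  simp only [chebSeq, hybridChar, Nat.cast_add, Nat.cast_ofNat, Nat.cast_one,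
    show (m : ℤ) + 3 - 1 = m + 2 by ring, show (m : ℤ) + 3 - 2 = m + 1 by ring,
    hT3, hT2, hU3, hU2, eval_sub, eval_mul, eval_ofNat, eval_X]
  linear_combination (I ^ m * ((U ℂ m).eval x * (x * I - 3 / 2)
    + (U ℂ ((m : ℤ) + 1)).eval x * (3 * x - 2 * x ^ 2 * I))) * I_sq

lemma hybridMatrix_mulVec_chebSeq_sub (m : ℕ) (x : ℂ) :
    hybridMatrix (m + 3) *ᵥ (fun k : Fin (m + 3) => chebSeq x k)
        - (I * x) • (fun k : Fin (m + 3) => chebSeq x k)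
      = Pi.single (Fin.last (m + 2)) (-I ^ m * hybridChar (m + 3) x) := by
  ext ⟨k, hk⟩
  simp only [Pi.sub_apply, Pi.smul_apply, smul_eq_mul]
  rcases k with _ | j
  · rw [hybridMatrix_mulVec_zero (by omega), Pi.single_eq_of_ne (by simp [Fin.ext_iff]),
      chebSeq_one, chebSeq_zero]
    ring
  by_cases hj : j + 2 < m + 3
  · rw [hybridMatrix_mulVec_succ hj, Pi.single_eq_of_ne (by simp [Fin.ext_iff]; omega),
      chebSeq_add_two]
    ring
  · obtain rfl : j = m + 1 := by omega
    rw [show (⟨m + 1 + 1, hk⟩ : Fin (m + 3)) = Fin.last (m + 2) from rfl, Pi.single_eq_same,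
      hybridMatrix_mulVec_last, ← chebSeq_last_row]

lemma hybridMatrix_mulVec_chebSeq_eq_smul_iff (m : ℕ) (x : ℂ) :
    hybridMatrix (m + 3) *ᵥ (fun k : Fin (m + 3) => chebSeq x k)
        = (I * x) • (fun k : Fin (m + 3) => chebSeq x k) ↔ hybridChar (m + 3) x = 0 := by
  rw [← sub_eq_zero, hybridMatrix_mulVec_chebSeq_sub, Pi.single_eq_zero_iff, neg_mul, neg_eq_zero,
    mul_eq_zero, or_iff_right (pow_ne_zero _ I_ne_zero)]

lemma eq_smul_chebSeq_of_mulVec_eq {n : ℕ} (hn : 1 < n) {P : Fin n → ℂ} {x : ℂ}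
    (hP : hybridMatrix n *ᵥ P = (I * x) • P) :
    P = P ⟨0, by omega⟩ • fun k : Fin n => chebSeq x k := by
  have hrec (k : ℕ) : ∀ hk : k < n, P ⟨k, hk⟩ = P ⟨0, by omega⟩ * chebSeq x k := by
    induction k using Nat.twoStepInduction with
    | zero => intro; rw [chebSeq_zero, mul_one]
    | one =>
      intro
      have h0 := congrFun hP ⟨0, by omega⟩
      rw [hybridMatrix_mulVec_zero hn, Pi.smul_apply, smul_eq_mul] at h0
      rw [chebSeq_one]
      linear_combination 2 * h0
    | more k ih₀ ih₁ =>
      intro hk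
      have hk1 := congrFun hP ⟨k + 1, by omega⟩
      rw [hybridMatrix_mulVec_succ hk, Pi.smul_apply, smul_eq_mul, ih₀, ih₁] at hk1
      rw [chebSeq_add_two]
      linear_combination 2 * hk1
  ext ⟨k, hk⟩
  exact hrec k hk

lemma hybridChar_eq_zero_of_mulVec_eq {m : ℕ} {P : Fin (m + 3) → ℂ} (hP0 : P ≠ 0) {x : ℂ}
    (hP : hybridMatrix (m + 3) *ᵥ P = (I * x) • P) : hybridChar (m + 3) x = 0 := by
  have hP_eq := eq_smul_chebSeq_of_mulVec_eq (by omega) hP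
  have hc : P ⟨0, by omega⟩ ≠ 0 := fun h => hP0 (by rw [hP_eq, h, zero_smul])
  rw [← hybridMatrix_mulVec_chebSeq_eq_smul_iff]
  rw [hP_eq, mulVec_smul, smul_comm] at hP
  exact smul_right_injective _ hc hP

/-- `λ` is an eigenvalue of the hybrid central-difference/BDF2 matrix `B` iff `λ = i x`
for a root `x` of `U_{n-1}(x) + i U_{n-2}(x) - i T_n(x) + T_{n-1}(x) = 0`; moreover the
eigenvector for `λ = i x` is `(i^0 U_0(x), …, i^{n-1} U_{n-1}(x))`. -/
theorem eigen_of_B (n : ℕ) (hn : 3 ≤ n)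
    (B : Matrix (Fin n) (Fin n) ℂ)
    (hB : B = Matrix.of fun i j : Fin n =>
      if (i : ℕ) < n - 1 then
        (if (j : ℕ) = (i : ℕ) + 1 then 1 / 2
         else if (j : ℕ) + 1 = (i : ℕ) then -(1 / 2) else 0)
      else
        (if (j : ℕ) = n - 3 then 1 / 2
         else if (j : ℕ) = n - 2 then -2
         else if (j : ℕ) = n - 1 then 3 / 2 else 0)) :
    (∀ lam : ℂ,
      (∃ P : Fin n → ℂ, P ≠ 0 ∧ B.mulVec P = lam • P) ↔
      (∃ x : ℂ, (U ℂ ((n : ℤ) - 1)).eval x + I * (U ℂ ((n : ℤ) - 2)).eval x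
          - I * (T ℂ n).eval x + (T ℂ ((n : ℤ) - 1)).eval x = 0 ∧ lam = I * x)) ∧
    (∀ x : ℂ, (U ℂ ((n : ℤ) - 1)).eval x + I * (U ℂ ((n : ℤ) - 2)).eval x
          - I * (T ℂ n).eval x + (T ℂ ((n : ℤ) - 1)).eval x = 0 →
      B.mulVec (fun k : Fin n => I ^ (k : ℕ) * (U ℂ (k : ℕ)).eval x)
        = (I * x) • (fun k : Fin n => I ^ (k : ℕ) * (U ℂ (k : ℕ)).eval x)) := by
  obtain ⟨m, rfl⟩ : ∃ m, n = m + 3 := ⟨n - 3, by omega⟩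
  obtain rfl : B = hybridMatrix (m + 3) := hB
  have eigen_iff (x : ℂ) := hybridMatrix_mulVec_chebSeq_eq_smul_iff m x
  refine ⟨fun lam => ⟨?_, ?_⟩, fun x hx => (eigen_iff x).2 hx⟩
  · rintro ⟨P, hP0, hP⟩
    have hlam : lam = I * (-I * lam) := by rw [← mul_assoc, mul_neg, I_mul_I, neg_neg, one_mul]
    rw [hlam] at hP
    exact ⟨-I * lam, hybridChar_eq_zero_of_mulVec_eq hP0 hP, hlam⟩
  · rintro ⟨x, hx, rfl⟩
    refine ⟨fun k => chebSeq x k, fun h => ?_, (eigen_iff x).2 hx⟩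
    simpa [chebSeq_zero] using congrFun h 0
end

section
/- The polynomial equation U_{n−1}(x) + i U_{n−2}(x) − i T_n(x) + T_{n−1}(x) = 0 has no real roots. -/
/-!
With `u = U_{n-1}(x)` and `v = U_{n-2}(x)` we have `T_{n-1}(x) = u - x v` and `T_n(x) = x u - v`,
so for real `x` the real and imaginary parts of the equation read `2u = x v` and `2v = x u`.
The Cassini-type identity `u² + v² - 2 x u v = 1` then forces `u² + v² = -1`.
-/

open Polynomial Polynomial.Chebyshev Complex

namespace Polynomial.Chebyshev

variable {R : Type*} [CommRing R]

theorem U_sq_add_U_sq (n : ℤ) :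
    U R n ^ 2 + U R (n + 1) ^ 2 - 2 * X * U R n * U R (n + 1) = 1 := by
  induction n with
  | zero => simp; ring
  | succ n ih =>
    have h := U_add_two R n
    linear_combination (norm := ring_nf) (U R (2 + n) - U R n) * h + ih
  | pred n ih =>
    have h := U_sub_one R (-n)
    linear_combination (norm := ring_nf) (U R (-1 - n) - U R (1 - n)) * h + ih

theorem U_eval_sq_add_U_eval_sq_eq_neg_one {x : R} {n : ℤ}
    (h₁ : 2 * (U R (n + 1)).eval x = x * (U R n).eval x)
    (h₂ : 2 * (U R n).eval x = x * (U R (n + 1)).eval x) :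
    (U R n).eval x ^ 2 + (U R (n + 1)).eval x ^ 2 = -1 := by
  have h := congrArg (eval x) (U_sq_add_U_sq (R := R) n)
  simp only [eval_sub, eval_add, eval_mul, eval_pow, eval_ofNat, eval_X, eval_one] at h
  linear_combination -h + (U R (n + 1)).eval x * h₁ + (U R n).eval x * h₂

theorem U_add_T (n : ℤ) : U R (n + 1) + T R (n + 1) = 2 * U R (n + 1) - X * U R n := by
  linear_combination (norm := ring_nf) T_eq_U_sub_X_mul_U R (n + 1)

theorem U_sub_T (n : ℤ) : U R n - T R (n + 2) = 2 * U R n - X * U R (n + 1) := by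
  linear_combination -T_eq_X_mul_U_sub_U R n

theorem eval_U_add_I_mul_U_sub_I_mul_T_add_T_ne_zero (n : ℤ) (x : ℝ) :
    (U ℂ (n + 1)).eval (x : ℂ) + I * (U ℂ n).eval (x : ℂ)
      - I * (T ℂ (n + 2)).eval (x : ℂ) + (T ℂ (n + 1)).eval (x : ℂ) ≠ 0 := by
  have hU (k : ℤ) : (U ℂ k).eval (x : ℂ) = ↑((U ℝ k).eval x) := (algebraMap_eval_U x k).symm
  have hT (k : ℤ) : (T ℂ k).eval (x : ℂ) = ↑((T ℝ k).eval x) := (algebraMap_eval_T x k).symm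
  intro h
  have h' : (↑((U ℝ (n + 1) + T ℝ (n + 1)).eval x) + ↑((U ℝ n - T ℝ (n + 2)).eval x) * I : ℂ)
      = 0 := by
    rw [← h, eval_add, eval_sub, hU, hU, hT, hT]
    push_cast
    ring
  rw [← mk_eq_add_mul_I, Complex.ext_iff, zero_re, zero_im] at h'
  obtain ⟨hre, him⟩ := h'
  rw [U_add_T] at hre
  rw [U_sub_T] at him
  simp only [eval_sub, eval_mul, eval_ofNat, eval_X] at hre him
  have hsum := U_eval_sq_add_U_eval_sq_eq_neg_one (x := x) (n := n) (by linarith) (by linarith)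
  linarith [add_nonneg (sq_nonneg ((U ℝ n).eval x)) (sq_nonneg ((U ℝ (n + 1)).eval x))]

end Polynomial.Chebyshev

theorem no_real_roots_general (n : ℕ) (x : ℝ) :
    (U ℂ ((n : ℤ) - 1)).eval (x : ℂ) + I * (U ℂ ((n : ℤ) - 2)).eval (x : ℂ)
      - I * (T ℂ n).eval (x : ℂ) + (T ℂ ((n : ℤ) - 1)).eval (x : ℂ) ≠ 0 := by
  have h := eval_U_add_I_mul_U_sub_I_mul_T_add_T_ne_zero ((n : ℤ) - 2) x
  rwa [show (n : ℤ) - 2 + 1 = n - 1 by ring, show (n : ℤ) - 2 + 2 = n by ring] at h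

/-- The equation `U_{n-1}(x) + i U_{n-2}(x) - i T_n(x) + T_{n-1}(x) = 0` has no real
roots. -/
theorem no_real_roots (n : ℕ) (hn : 1 ≤ n) (x : ℝ) :
    (U ℂ ((n : ℤ) - 1)).eval (x : ℂ) + I * (U ℂ ((n : ℤ) - 2)).eval (x : ℂ)
      - I * (T ℂ n).eval (x : ℂ) + (T ℂ ((n : ℤ) - 1)).eval (x : ℂ) ≠ 0 :=
  no_real_roots_general n x
end

section
/- The polynomial U_{n−1}(x) + i U_{n−2}(x) − i T_n(x) + T_{n−1}(x) has n distinct complex roots (i.e., it is squarefree). -/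
set_option maxRecDepth 8000
set_option maxHeartbeats 1600000

open Polynomial Polynomial.Chebyshev Complex


lemma cheb_degree : ∀ m : ℕ, (T ℂ m).degree = m ∧ (U ℂ m).degree = m := by
  have h2 : (2:ℂ[X]) = C 2 := (map_ofNat Polynomial.C 2).symm
  intro m
  induction m using Nat.twoStepInduction with
  | zero => simp [T_zero, U_zero]
  | one =>
    constructor
    · simp only [Nat.cast_one, T_one, degree_X]
    · rw [Nat.cast_one, U_one, h2, degree_C_mul (by norm_num : (2:ℂ) ≠ 0), degree_X]; norm_cast
  | more m ih1 ih2 =>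
    have hXdeg : ∀ p : ℂ[X], p.degree = ((m+1:ℕ) : WithBot ℕ) →
        (2 * X * p).degree = ((m+2:ℕ) : WithBot ℕ) := by
      intro p hp
      rw [show (2 * X * p : ℂ[X]) = C 2 * (X * p) by rw [← h2]; ring,
        degree_C_mul (by norm_num : (2:ℂ) ≠ 0), degree_mul, degree_X, hp]
      norm_cast; omega
    have hlt : ∀ p : ℂ[X], p.degree = ((m:ℕ) : WithBot ℕ) →
        p.degree < ((m+2:ℕ) : WithBot ℕ) := by
      intro p hp; rw [hp]; exact_mod_cast Nat.lt_add_of_pos_right (by norm_num)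
    have e1 : ((m+1:ℕ):ℤ) = (m:ℤ)+1 := by push_cast; ring
    constructor
    · rw [show ((m+2:ℕ):ℤ) = (m:ℤ) + 2 by push_cast; ring, T_add_two, ← e1,
        degree_sub_eq_left_of_degree_lt]
      · exact hXdeg _ ih2.1
      · rw [hXdeg _ ih2.1]; exact hlt _ ih1.1
    · rw [show ((m+2:ℕ):ℤ) = (m:ℤ) + 2 by push_cast; ring, U_add_two, ← e1,
        degree_sub_eq_left_of_degree_lt]
      · exact hXdeg _ ih2.2
      · rw [hXdeg _ ih2.2]; exact hlt _ ih1.2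

lemma key_eval (k : ℕ) (z : ℂ) (hz : z ≠ 0) :
    2 * z^(k+1) * (z^2 - 1) *
      (U ℂ (((k:ℤ)+1) - 1) + C I * U ℂ (((k:ℤ)+1) - 2) - C I * T ℂ ((k:ℤ)+1)
        + T ℂ (((k:ℤ)+1) - 1)).eval ((z + z⁻¹)/2)
    = (z - I)^3 - I * z^(2*k+1) * (z + I)^3 := by
  obtain ⟨w, hw⟩ : ∃ w, exp w = z := by
    have : z ∈ Set.range exp := by rw [Complex.range_exp]; exact hz
    exact this
  set θ : ℂ := -I * w with hθ
  have hθI : θ * I = w := by rw [hθ, show -I*w*I = -(I*I)*w by ring, I_mul_I]; ring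
  have hmw : ∀ c : ℂ, c * θ * I = c * w := by intro c; rw [mul_assoc, hθI]
  have h2I : (2 * I : ℂ) ≠ 0 := by simp [I_ne_zero]
  have hc : ∀ m : ℤ, cos ((m:ℂ) * θ) = (z ^ m + z ^ (-m)) / 2 := by
    intro m
    rw [Complex.cos, show ((m:ℂ)*θ*I) = (((m:ℤ)):ℂ)*w from hmw _,
      show (-((m:ℂ)*θ)*I) = (((-m:ℤ)):ℂ)*w by push_cast; rw [← hmw (-(m:ℂ))]; ring,
      Complex.exp_int_mul, Complex.exp_int_mul, hw]
  have hs : ∀ m : ℤ, sin ((m:ℂ) * θ) = (z ^ m - z ^ (-m)) / (2 * I) := by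
    intro m
    rw [Complex.sin, show ((m:ℂ)*θ*I) = (((m:ℤ)):ℂ)*w from hmw _,
      show (-((m:ℂ)*θ)*I) = (((-m:ℤ)):ℂ)*w by push_cast; rw [← hmw (-(m:ℂ))]; ring,
      Complex.exp_int_mul, Complex.exp_int_mul, hw, eq_div_iff h2I]
    linear_combination (z ^ (-m) - z ^ m) * I_sq
  have hx : (z + z⁻¹)/2 = cos θ := by
    have h := hc 1; rw [Int.cast_one, one_mul] at h; rw [h]; norm_num
  have hsin1 : sin θ = (z - z⁻¹) / (2 * I) := by
    have h := hs 1; rw [Int.cast_one, one_mul] at h; rw [h]; norm_num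
  have hz2 : (z^2 - 1 : ℂ) = (2*I*z) * sin θ := by
    rw [hsin1]; field_simp
  rw [hx, hz2]
  rw [show ((k:ℤ)+1-1) = (k:ℤ) by ring, show ((k:ℤ)+1-2) = (k:ℤ)-1 by ring]
  simp only [eval_add, eval_sub, eval_mul, eval_C]
  have hU1 := U_complex_cos θ ((k:ℤ))
  have hU2 := U_complex_cos θ ((k:ℤ)-1)
  have hT1 := T_complex_cos θ ((k:ℤ)+1)
  have hT2 := T_complex_cos θ ((k:ℤ))
  have expand : 2 * z ^ (k + 1) * (2 * I * z * sin θ) *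
      ((U ℂ ((k:ℤ))).eval (cos θ) + I * (U ℂ ((k:ℤ)-1)).eval (cos θ)
        - I * (T ℂ ((k:ℤ)+1)).eval (cos θ) + (T ℂ ((k:ℤ))).eval (cos θ))
      = 2 * z ^ (k + 1) * (2 * I * z) *
        (((U ℂ ((k:ℤ))).eval (cos θ) * sin θ) + I * ((U ℂ ((k:ℤ)-1)).eval (cos θ) * sin θ)
          - I * ((T ℂ ((k:ℤ)+1)).eval (cos θ)) * sin θ
          + ((T ℂ ((k:ℤ))).eval (cos θ)) * sin θ) := by ring
  rw [expand, hU1, hU2, hT1, hT2, hsin1]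
  have e1 : (((k:ℤ):ℂ) + 1) * θ = ((((k:ℤ)+1 : ℤ)):ℂ) * θ := by push_cast; ring
  have e2 : ((((k:ℤ)-1 : ℤ):ℂ) + 1) * θ = (((k:ℤ)):ℂ) * θ := by push_cast; ring
  rw [e1, e2, hs ((k:ℤ)+1), hs ((k:ℤ)), hc ((k:ℤ)+1), hc ((k:ℤ))]
  have zk1 : z ^ ((k:ℤ)+1) = z ^ (k+1) := by
    rw [show (k:ℤ)+1 = ((k+1:ℕ):ℤ) by push_cast; ring, zpow_natCast]
  have zk1' : z ^ (-((k:ℤ)+1)) = (z ^ (k+1))⁻¹ := by rw [zpow_neg, zk1]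
  have zk : z ^ ((k:ℤ)) = z ^ k := zpow_natCast z k
  have zk' : z ^ (-(k:ℤ)) = (z ^ k)⁻¹ := by rw [zpow_neg, zk]
  rw [zk1, zk1', zk, zk']
  have hzk : z ^ k ≠ 0 := pow_ne_zero _ hz
  have hzk1 : z ^ (k+1) ≠ 0 := pow_ne_zero _ hz
  have hinv : ∀ x : ℂ, x / (2*I) = x * (-I) / 2 := by
    intro x; rw [div_eq_div_iff h2I two_ne_zero]; linear_combination 2*x*I_sq
  have hu : z * z⁻¹ = 1 := mul_inv_cancel₀ hz
  have hab : z^k * z⁻¹^k = 1 := by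
    rw [inv_pow, mul_inv_cancel₀ (pow_ne_zero k hz)]
  simp only [hinv]
  rw [show 2*k+1 = k+(k+1) by ring, pow_add]
  simp only [pow_succ, mul_inv, ← inv_pow]
  linear_combination (z^k*z⁻¹^k*I - 3*z*z^k*z⁻¹^k - z*(z^k)^2 + z*z⁻¹*z^k*z⁻¹^k*I - z^2*z^k*z⁻¹^k*I + z^2*(z^k)^2*I)*hu + (I - 3*z - 3*z^2*I + z^3)*hab + (I - 3*z - z*(z^k)^2 + z*(z^k)^2*I^2 + 2*z^2*z^k*z⁻¹^k*I + z^2*(z^k)^2*I + 3*z^2*z⁻¹*z^k*z⁻¹^k + z^2*z⁻¹*(z^k)^2 - z^2*z⁻¹^2*z^k*z⁻¹^k*I - z^3*z^k*z⁻¹^k + z^3*z⁻¹*z^k*z⁻¹^k*I - z^3*z⁻¹*(z^k)^2*I + z^4*(z^k)^2*I)*I_sq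

lemma real_contra (k : ℕ) (t : ℝ)
    (hQ : -(6*t) = (2*(k:ℝ)+1)*(1-t^2))
    (hE : (t-1)^3 + (-1)^k * t^(2*k+1)*(t+1)^3 = 0) : False := by
  have hk0 : (0:ℝ) ≤ k := Nat.cast_nonneg k
  have hsq : ((t-1)^3)^2 = (t^(2*k+1)*(t+1)^3)^2 := by
    have hs2 : ((-1:ℝ)^k)^2 = 1 := by
      rw [← pow_mul, mul_comm, pow_mul]; norm_num
    linear_combination ((t-1)^3 - (-1)^k * t^(2*k+1)*(t+1)^3)*hE
      + (t^(2*k+1)*(t+1)^3)^2*hs2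
  have hm0 : (0:ℝ) < 2*(k:ℝ)+1 := by linarith
  rcases lt_trichotomy t 0 with ht|ht|ht
  · have ht2 : t^2 < 1 := by
      by_contra hc; push_neg at hc
      have := mul_nonpos_of_nonneg_of_nonpos (le_of_lt hm0) (by linarith : 1 - t^2 ≤ 0)
      linarith
    have ht1 : -1 < t := by nlinarith [sq_nonneg (t+1)]
    have h1 : 1 < ((t-1)^3)^2 := by nlinarith [sq_nonneg ((t-1)^3+1), sq_nonneg ((t-1)^2-1), sq_nonneg (t-1)]
    have h2 : (t^(2*k+1)*(t+1)^3)^2 < 1 := by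
      have e : (t^(2*k+1)*(t+1)^3)^2 = (t^2)^(2*k+1)*((t+1)^2)^3 := by ring
      have b1 : (t^2)^(2*k+1) ≤ 1 := pow_le_one₀ (sq_nonneg t) (by nlinarith)
      have b2 : ((t+1)^2)^3 < 1 := pow_lt_one₀ (sq_nonneg _) (by nlinarith) (by norm_num)
      calc (t^(2*k+1)*(t+1)^3)^2 = (t^2)^(2*k+1)*((t+1)^2)^3 := e
        _ ≤ 1*((t+1)^2)^3 := by
            apply mul_le_mul_of_nonneg_right b1 (by positivity)
        _ < 1 := by rw [one_mul]; exact b2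
    linarith
  · rw [ht] at hQ; norm_num at hQ; linarith
  · have ht2 : 1 < t^2 := by
      by_contra hc; push_neg at hc
      have := mul_nonneg (le_of_lt hm0) (by linarith : (0:ℝ) ≤ 1 - t^2)
      linarith
    have ht1 : 1 < t := by
      by_contra hc; push_neg at hc
      have := mul_le_mul hc hc (le_of_lt ht) zero_le_one
      nlinarith
    have hp : t ≤ t^(2*k+1) := le_self_pow₀ (le_of_lt ht1) (by omega)
    have h1 : (t-1)^3 < t^(2*k+1)*(t+1)^3 := by
      nlinarith [mul_le_mul_of_nonneg_right hp (pow_nonneg (by linarith : (0:ℝ) ≤ t+1) 3),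
        sq_nonneg t, sq_nonneg (t-1), sq_nonneg (t+1)]
    have ha : 0 < (t-1)^3 := pow_pos (by linarith) 3
    have hb : 0 < t^(2*k+1)*(t+1)^3 := by positivity
    nlinarith [hsq, h1, ha, hb, mul_pos (sub_pos.2 h1) (add_pos ha hb)]

lemma fzero (k : ℕ) (z : ℂ)
    (h0 : (z - I)^3 - I*(z^(2*k+1)*(z+I)^3) = 0)
    (h1 : 3*(z-I)^2 - I*((2*(k:ℂ)+1)*z^(2*k)*(z+I)^3 + z^(2*k+1)*(3*(z+I)^2)) = 0) :
    False := by
  have hmne : (2*(k:ℂ)+1) ≠ 0 := by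
    have : (2*(k:ℂ)+1) = ((2*k+1 : ℕ) : ℂ) := by push_cast; ring
    rw [this]; exact_mod_cast Nat.succ_ne_zero (2*k)
  have hzI : z ≠ I := by
    rintro rfl
    have hne : I*(I^(2*k+1)*(I+I)^3) ≠ 0 := by
      apply mul_ne_zero I_ne_zero
      apply mul_ne_zero (pow_ne_zero _ I_ne_zero)
      apply pow_ne_zero
      intro h
      have : (2:ℂ)*I = 0 := by rw [two_mul]; exact h
      exact I_ne_zero ((mul_eq_zero.1 this).resolve_left two_ne_zero)
    apply hne
    have : ((I:ℂ) - I)^3 = 0 := by simp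
    linear_combination this - h0
  have hcombo : (z-I)^3*(6*I*z - (2*(k:ℂ)+1)*(z^2+1)) = 0 := by
    linear_combination (z*(z+I)*(z-I))*h1 - ((2*(k:ℂ)+1)*(z^2+1)+3*z*(z-I))*h0
      - (2*(k:ℂ)+1)*z^(2*k)*z*I*(z+I)^3*I_sq
  have h6 : 6*I*z = (2*(k:ℂ)+1)*(z^2+1) := by
    rcases mul_eq_zero.1 hcombo with h|h
    · exact absurd (sub_eq_zero.1 (pow_eq_zero_iff (by norm_num : 3 ≠ 0) |>.1 h)) hzI
    · exact sub_eq_zero.1 h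
  have hconj := congrArg (starRingEnd ℂ) h6
  simp only [map_mul, map_add, map_pow, map_one, map_ofNat, Complex.conj_I,
    Complex.conj_natCast] at hconj
  set w : ℂ := -((starRingEnd ℂ) z) with hwdef
  have hw6 : 6*I*w = (2*(k:ℂ)+1)*(w^2+1) := by
    rw [hwdef]; linear_combination hconj
  by_cases hzw : z = w
  · have hre0 : z.re = 0 := by
      have h2 := Complex.add_conj z
      rw [show (starRingEnd ℂ) z = -z by rw [← neg_neg ((starRingEnd ℂ) z), ← hwdef, ← hzw]] at h2
      have : ((2*z.re : ℝ) : ℂ) = 0 := by rw [← h2]; ring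
      have h3 : (2*z.re : ℝ) = 0 := by exact_mod_cast this
      linarith
    set t : ℝ := z.im with htdef
    have hzt : z = (t:ℂ)*I := by
      have h4 := Complex.re_add_im z
      rw [hre0] at h4
      rw [← h4]; simp; rfl
    rw [hzt] at h0 h6
    have hIp : (I:ℂ)^(2*k+1) = (-1)^k * I := by rw [pow_succ, pow_mul, I_sq]
    rw [mul_pow, hIp] at h0
    have hE : ((t:ℂ)-1)^3 + (-1)^k*(t:ℂ)^(2*k+1)*((t:ℂ)+1)^3 = 0 := by
      linear_combination I*h0 + (((t:ℂ)-1)^3*(1-I^2)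
        + (-1)^k*(t:ℂ)^(2*k+1)*((t:ℂ)+1)^3*(1-I^2+I^4))*I_sq
    have hQ : ((-(6*t) : ℝ) : ℂ) = (((2*(k:ℝ)+1)*(1-t^2) : ℝ) : ℂ) := by
      push_cast
      linear_combination h6 + ((2*(k:ℂ)+1)*(t:ℂ)^2-6*(t:ℂ))*I_sq
    refine real_contra k t (by exact_mod_cast hQ) ?_
    have : (((t-1)^3 + (-1)^k * t^(2*k+1)*(t+1)^3 : ℝ) : ℂ) = 0 := by
      push_cast; linear_combination hE
    exact_mod_cast this
  · have hd : (z - w)*(6*I - (2*(k:ℂ)+1)*(z+w)) = 0 := by linear_combination h6 - hw6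
    have h67 : 6*I = (2*(k:ℂ)+1)*(z+w) :=
      sub_eq_zero.1 ((mul_eq_zero.1 hd).resolve_left (sub_ne_zero.mpr hzw))
    have hzw1 : (2*(k:ℂ)+1)*(1 - w*z) = 0 := by linear_combination z*h67 - h6
    have hwz : w*z = 1 := by
      have := (mul_eq_zero.1 hzw1).resolve_left hmne
      linear_combination -this
    have hns : ((Complex.normSq z : ℝ) : ℂ) = -1 := by
      rw [← Complex.mul_conj]
      rw [hwdef] at hwz
      linear_combination -hwz
    have : (Complex.normSq z : ℝ) = -1 := by exact_mod_cast hns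
    nlinarith [Complex.normSq_nonneg z]

/-- The polynomial `U_{n-1} + i U_{n-2} - i T_n + T_{n-1}` has `n` distinct complex roots
(it is squarefree of degree `n`). -/
theorem q_has_n_distinct_roots (n : ℕ) (hn : 1 ≤ n) :
    Squarefree (U ℂ ((n : ℤ) - 1) + C I * U ℂ ((n : ℤ) - 2) - C I * T ℂ n
        + T ℂ ((n : ℤ) - 1)) ∧
    (U ℂ ((n : ℤ) - 1) + C I * U ℂ ((n : ℤ) - 2) - C I * T ℂ n
        + T ℂ ((n : ℤ) - 1)).roots.toFinset.card = n := by
  obtain ⟨k, rfl⟩ : ∃ k, n = k + 1 := ⟨n-1, by omega⟩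
  rw [show ((k+1:ℕ):ℤ) = (k:ℤ)+1 by push_cast; ring]
  set p : ℂ[X] := U ℂ ((k:ℤ)+1-1) + C I * U ℂ ((k:ℤ)+1-2) - C I * T ℂ ((k:ℤ)+1)
      + T ℂ ((k:ℤ)+1-1) with hpdef
  -- degree computation
  have hTk1 : (T ℂ ((k:ℤ)+1)).degree = ((k+1 : ℕ) : WithBot ℕ) := by
    rw [show (k:ℤ)+1 = ((k+1:ℕ):ℤ) by push_cast; ring]; exact (cheb_degree (k+1)).1
  have hUk : (U ℂ ((k:ℤ)+1-1)).degree = ((k : ℕ) : WithBot ℕ) := by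
    rw [show (k:ℤ)+1-1 = ((k:ℕ):ℤ) by push_cast; ring]; exact (cheb_degree k).2
  have hTk : (T ℂ ((k:ℤ)+1-1)).degree = ((k : ℕ) : WithBot ℕ) := by
    rw [show (k:ℤ)+1-1 = ((k:ℕ):ℤ) by push_cast; ring]; exact (cheb_degree k).1
  have hUk2 : (U ℂ ((k:ℤ)+1-2)).degree ≤ ((k : ℕ) : WithBot ℕ) := by
    cases k with
    | zero =>
      rw [show ((0:ℕ):ℤ)+1-2 = (-1 : ℤ) by norm_num, U_neg_one, degree_zero]; exact bot_le
    | succ j =>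
      rw [show ((j+1:ℕ):ℤ)+1-2 = ((j:ℕ):ℤ) by push_cast; ring, (cheb_degree j).2]
      exact_mod_cast Nat.le_succ j
  have hdegD : (C I * T ℂ ((k:ℤ)+1)).degree = ((k+1 : ℕ) : WithBot ℕ) := by
    rw [degree_C_mul I_ne_zero, hTk1]
  have hklt : ((k : ℕ) : WithBot ℕ) < ((k+1 : ℕ) : WithBot ℕ) := by
    exact_mod_cast Nat.lt_succ_self k
  have hdegR : (U ℂ ((k:ℤ)+1-1) + C I * U ℂ ((k:ℤ)+1-2) + T ℂ ((k:ℤ)+1-1)).degree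
      < ((k+1 : ℕ) : WithBot ℕ) := by
    apply lt_of_le_of_lt (degree_add_le _ _)
    rw [max_lt_iff]
    constructor
    · apply lt_of_le_of_lt (degree_add_le _ _)
      rw [max_lt_iff]
      refine ⟨by rw [hUk]; exact hklt, ?_⟩
      calc (C I * U ℂ ((k:ℤ)+1-2)).degree = (U ℂ ((k:ℤ)+1-2)).degree :=
            degree_C_mul I_ne_zero
        _ < _ := lt_of_le_of_lt hUk2 hklt
    · rw [hTk]; exact hklt
  have hdeg : p.degree = ((k+1 : ℕ) : WithBot ℕ) := by
    rw [hpdef, show U ℂ ((k:ℤ)+1-1) + C I * U ℂ ((k:ℤ)+1-2) - C I * T ℂ ((k:ℤ)+1)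
        + T ℂ ((k:ℤ)+1-1) =
      (U ℂ ((k:ℤ)+1-1) + C I * U ℂ ((k:ℤ)+1-2) + T ℂ ((k:ℤ)+1-1)) - C I * T ℂ ((k:ℤ)+1)
        by ring]
    rw [degree_sub_eq_right_of_degree_lt (by rw [hdegD]; exact hdegR), hdegD]
  have hp0 : p ≠ 0 := by
    intro h; rw [h, degree_zero] at hdeg; exact (by simp : ((k+1:ℕ) : WithBot ℕ) ≠ ⊥) hdeg.symm
  have hnat : p.natDegree = k+1 := natDegree_eq_of_degree_eq_some hdeg
  have hsplits : p.Splits := IsAlgClosed.splits p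
  have hcard : p.roots.card = k+1 := by
    rw [← hnat]; exact (splits_iff_card_roots.mp hsplits)
  have hnodup : p.roots.Nodup := by
    rw [Multiset.nodup_iff_count_le_one]
    intro x
    by_contra hcnt
    push_neg at hcnt
    have hmult : 2 ≤ p.rootMultiplicity x := by
      rw [← count_roots]; omega
    have hdvd : (X - C x)^2 ∣ p :=
      dvd_trans (pow_dvd_pow _ hmult) (p.pow_rootMultiplicity_dvd x)
    obtain ⟨q, hq⟩ := hdvd
    have heval : p.eval x = 0 := by rw [hq]; simp
    have hder : p.derivative.eval x = 0 := by
      rw [hq, derivative_mul, derivative_pow]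
      simp
    obtain ⟨θ, hθ⟩ := Complex.cos_surjective x
    set z := Complex.exp (θ*I) with hzdef
    have hz : z ≠ 0 := Complex.exp_ne_zero _
    have hxz : (z + z⁻¹)/2 = x := by
      rw [← hθ, Complex.cos, hzdef, ← Complex.exp_neg, neg_mul]
    have hkey : ∀ y : ℂ, y ≠ 0 →
        2*y^(k+1)*(y^2-1)*p.eval ((y+y⁻¹)/2) = (y-I)^3 - I*y^(2*k+1)*(y+I)^3 :=
      fun y hy => key_eval k y hy
    have hf0 : (z-I)^3 - I*(z^(2*k+1)*(z+I)^3) = 0 := by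
      have h := hkey z hz
      rw [hxz, heval] at h
      linear_combination -h
    -- derivative of g is 0 at z
    have hφ : HasDerivAt (fun y : ℂ => (y + y⁻¹)/2) ((1 + -(z^2)⁻¹)/2) z :=
      ((hasDerivAt_id z).add (hasDerivAt_inv hz)).div_const 2
    have hPe : HasDerivAt (fun y : ℂ => p.eval ((y+y⁻¹)/2))
        (p.derivative.eval ((z+z⁻¹)/2) * ((1 + -(z^2)⁻¹)/2)) z :=
      by have h := (Polynomial.hasDerivAt p ((z+z⁻¹)/2)).comp z hφ; exact h
    have hg : HasDerivAt (fun y : ℂ => 2*y^(k+1)*(y^2-1)*p.eval ((y+y⁻¹)/2)) 0 z := by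
      have h := (((hasDerivAt_pow (k+1) z).const_mul (2:ℂ)).mul
        ((hasDerivAt_pow 2 z).sub_const 1)).mul hPe
      rw [hxz, heval, hder] at h
      simp at h; exact h
    have hfg : (fun y : ℂ => (y-I)^3 - I*(y^(2*k+1)*(y+I)^3))
        =ᶠ[nhds z] (fun y : ℂ => 2*y^(k+1)*(y^2-1)*p.eval ((y+y⁻¹)/2)) := by
      filter_upwards [IsOpen.mem_nhds isOpen_compl_singleton hz] with y hy
      have h := hkey y hy
      linear_combination -h
    have hF0 : HasDerivAt (fun y : ℂ => (y-I)^3 - I*(y^(2*k+1)*(y+I)^3)) 0 z :=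
      hg.congr_of_eventuallyEq hfg
    have hA := ((hasDerivAt_id z).sub_const I).pow 3
    have hB := ((hasDerivAt_pow (2*k+1) z).mul
      (((hasDerivAt_id z).add_const I).pow 3)).const_mul I
    have hD0 := (hA.sub hB).unique hF0
    simp only [id_eq, Nat.add_sub_cancel, pow_one, mul_one, Pi.pow_apply] at hD0
    push_cast at hD0
    refine fzero k z hf0 ?_
    linear_combination hD0
  constructor
  · exact ((Polynomial.nodup_roots_iff_of_splits hp0 hsplits).mp hnodup).squarefree
  · rw [Multiset.toFinset_card_of_nodup hnodup, hcard]
end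

section
/- Suppose λ_j ∈ ℂ is a common root of the two equations (2λ − 4) U_n(θ) = (2λ + 4) i U_{n−1}(θ) and its λ-derivative (with θ = −iλ), obtained from the characteristic equation of the (n+1)×(n+1) time-discretization matrix. Then (−(4 + 8n) λ_j³ − 12 λ_j²) · U_{n−1}(θ_j) = 0; consequently, if λ_j is not real and λ_j ≠ 0, then U_{n−1}(θ_j) = 0. -/
open Polynomial Polynomial.Chebyshev Complex

/-- Eliminating `T_n(θ)` between the characteristic equation and its derivative leaves a
multiple of `U_{n-1}(θ)`; the identity only uses `i² = -1`, not the Chebyshev structure. -/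
theorem cubic_mul_eq_zero_of_double_root {R : Type*} [CommRing R] {i : R} (hi : i ^ 2 = -1)
    (n lam t u : R)
    (h1 : (2 * lam - 4) * t = (2 * lam ^ 2 - 2 * lam + 4) * i * u)
    (h2 : (lam ^ 2 + 1) * (4 * lam - 2 + n * (2 * lam - 4)) * i * u
        - 2 * (lam ^ 2 + 1) * t
        - n * (2 * lam ^ 2 - 2 * lam + 4) * t
        - i * lam * (2 * lam ^ 2 - 2 * lam + 4) * u = 0) :
    (-(4 + 8 * n) * lam ^ 3 - 12 * lam ^ 2) * u = 0 := by
  linear_combination (-i * (2 * lam - 4)) * h2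
    - i * (2 * (lam ^ 2 + 1) + n * (2 * lam ^ 2 - 2 * lam + 4)) * h1
    - ((4 + 8 * n) * lam ^ 3 + 12 * lam ^ 2) * u * hi

theorem Complex.ofReal_mul_add_ofReal_ne_zero {a b : ℝ} (ha : a ≠ 0) {z : ℂ} (hz : z.im ≠ 0) :
    (a : ℂ) * z + b ≠ 0 := by
  intro h
  have him : a * z.im = 0 := by simpa using congrArg Complex.im h
  exact mul_ne_zero ha hz him

theorem Complex.cubic_ne_zero_of_im_ne_zero (n : ℕ) {z : ℂ} (hz : z.im ≠ 0) (hz₀ : z ≠ 0) :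
    -(4 + 8 * (n : ℂ)) * z ^ 3 - 12 * z ^ 2 ≠ 0 := by
  have hlin : ((4 + 8 * n : ℝ) : ℂ) * z + (12 : ℝ) ≠ 0 :=
    ofReal_mul_add_ofReal_ne_zero (by positivity) hz
  have hfac : -(4 + 8 * (n : ℂ)) * z ^ 3 - 12 * z ^ 2
      = -z ^ 2 * (((4 + 8 * n : ℝ) : ℂ) * z + (12 : ℝ)) := by
    push_cast
    ring
  rw [hfac]
  exact mul_ne_zero (neg_ne_zero.mpr (pow_ne_zero 2 hz₀)) hlin

theorem multiple_root_consequence_general (n : ℕ) (lam θ : ℂ)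
    (h1 : (2 * lam - 4) * (T ℂ n).eval θ
        = (2 * lam ^ 2 - 2 * lam + 4) * I * (U ℂ ((n : ℤ) - 1)).eval θ)
    (h2 : (lam ^ 2 + 1) * (4 * lam - 2 + n * (2 * lam - 4)) * I
            * (U ℂ ((n : ℤ) - 1)).eval θ
        - 2 * (lam ^ 2 + 1) * (T ℂ n).eval θ
        - n * (2 * lam ^ 2 - 2 * lam + 4) * (T ℂ n).eval θ
        - I * lam * (2 * lam ^ 2 - 2 * lam + 4) * (U ℂ ((n : ℤ) - 1)).eval θ = 0) :
    (-(4 + 8 * n) * lam ^ 3 - 12 * lam ^ 2) * (U ℂ ((n : ℤ) - 1)).eval θ = 0 ∧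
    (lam.im ≠ 0 → lam ≠ 0 → (U ℂ ((n : ℤ) - 1)).eval θ = 0) := by
  have key := cubic_mul_eq_zero_of_double_root I_sq (n : ℂ) lam _ _ h1 h2
  exact ⟨key, fun him hne =>
    (mul_eq_zero.mp key).resolve_left (cubic_ne_zero_of_im_ne_zero n him hne)⟩

/-- If `λ` is a common root of the characteristic equation
`(2λ - 4) T_n(θ) = (2λ² - 2λ + 4) i U_{n-1}(θ)` (with `θ = -iλ`) and of its λ-derivative
`(λ²+1)[4λ-2+n(2λ-4)] i U_{n-1}(θ) - 2(λ²+1) T_n(θ) - n(2λ²-2λ+4) T_n(θ)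
  - iλ(2λ²-2λ+4) U_{n-1}(θ) = 0`, then
`(-(4+8n) λ³ - 12 λ²) U_{n-1}(θ) = 0`; consequently, if `λ` is not real and `λ ≠ 0`,
then `U_{n-1}(θ) = 0`. -/
theorem multiple_root_consequence (n : ℕ) (lam θ : ℂ) (hθ : θ = -I * lam)
    (h1 : (2 * lam - 4) * (T ℂ n).eval θ
        = (2 * lam ^ 2 - 2 * lam + 4) * I * (U ℂ ((n : ℤ) - 1)).eval θ)
    (h2 : (lam ^ 2 + 1) * (4 * lam - 2 + n * (2 * lam - 4)) * I
            * (U ℂ ((n : ℤ) - 1)).eval θ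
        - 2 * (lam ^ 2 + 1) * (T ℂ n).eval θ
        - n * (2 * lam ^ 2 - 2 * lam + 4) * (T ℂ n).eval θ
        - I * lam * (2 * lam ^ 2 - 2 * lam + 4) * (U ℂ ((n : ℤ) - 1)).eval θ = 0) :
    (-(4 + 8 * n) * lam ^ 3 - 12 * lam ^ 2) * (U ℂ ((n : ℤ) - 1)).eval θ = 0 ∧
    (lam.im ≠ 0 → lam ≠ 0 → (U ℂ ((n : ℤ) - 1)).eval θ = 0) :=
  multiple_root_consequence_general n lam θ h1 h2
end
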